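/- Let p be a prime, let n ≥ 1 be an odd integer, and set q_n = (p^n − p)/(p + 1). Let L ∈ ℤ_p⟦T⟧ be nonzero with λ(L) < p^n − q_n, and let θ ∈ ℤ_p[T] be a polynomial of degree < p^n such that ω_n divides θ − ω_n^+·L in ℤ_p⟦T⟧, where ω_n^+ = ∏_{1 ≤ i ≤ n, i even} Φ_{p^i}(1+T). Then θ ≠ 0, μ(θ) = μ(L), and λ(θ) = λ(L) + q_n. -/

import Mathlib

/-!
Write `L = p ^ μ • L'` with `L' ≢ 0 (mod p)`. Modulo `p` one has `ω_n ≡ T ^ p ^ n` and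
`ω_n⁺ ≡ T ^ q_n`, so `ω_n` is a distinguished polynomial, and the hypotheses say exactly that `θ`
is the Weierstrass remainder of `ω_n⁺ L` on division by `ω_n`. Weierstrass division is linear,
so `θ = p ^ μ • R` with `R` the remainder of `ω_n⁺ L'`. Reducing `ω_n⁺ L' = ω_n Q + R` modulo `p`
gives `R ≡ T ^ q_n L' - T ^ p ^ n Q`, whose order is `q_n + λ(L)` because `q_n + λ(L) < p ^ n`.
-/

open PowerSeries Polynomial Classical in
/-- `p`-adic valuation on `ℤ_[p]`, with value `⊤` at `0`. -/
noncomputable def vp (p : ℕ) [Fact p.Prime] (x : ℤ_[p]) : ℕ∞ :=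
  if x = 0 then ⊤ else x.valuation

/-- Iwasawa `μ`-invariant: the minimum of the `p`-adic valuations of the coefficients. -/
noncomputable def mu (p : ℕ) [Fact p.Prime] (F : PowerSeries ℤ_[p]) : ℕ∞ :=
  ⨅ i : ℕ, vp p (PowerSeries.coeff i F)

/-- Iwasawa `λ`-invariant: the least index whose coefficient valuation attains `μ`. -/
noncomputable def lam (p : ℕ) [Fact p.Prime] (F : PowerSeries ℤ_[p]) : ℕ :=
  sInf { i : ℕ | vp p (PowerSeries.coeff i F) = mu p F }

open scoped Polynomial PowerSeries
open IsLocalRing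

lemma add_one_mul_sum_filter_even_pow_sub_pow_add (p m : ℕ) :
    (p + 1) * ∑ i ∈ (Finset.Icc 1 (2 * m + 1)).filter (fun i => Even i), (p ^ i - p ^ (i - 1))
      + p = p ^ (2 * m + 1) := by
  induction m with
  | zero => simp
  | succ m ih =>
    rw [Finset.sum_filter] at ih ⊢
    rw [show 2 * (m + 1) + 1 = 2 * m + 1 + 1 + 1 by ring, Finset.sum_Icc_succ_top (by omega),
      Finset.sum_Icc_succ_top (by omega)]
    simp only [Nat.even_mul, even_two, true_or, Even.add_one, Odd.add_one, ↓reduceIte,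
      add_tsub_cancel_right, Nat.even_add_one, not_false_eq_true, not_true_eq_false, add_zero]
    generalize (∑ i ∈ Finset.Icc 1 (2 * m + 1), if Even i then p ^ i - p ^ (i - 1) else 0) = S
      at ih ⊢
    rcases p.eq_zero_or_pos with rfl | hp
    · simp_all
    have hle : p ^ (2 * m + 1) ≤ p ^ (2 * m + 1 + 1) := Nat.pow_le_pow_right hp (by omega)
    zify [hle] at ih ⊢
    linear_combination ih

/-- Each summand is `φ(p ^ i) = deg Φ_{p ^ i}`, so this says `q_n = deg ω_n⁺`. -/
lemma sum_filter_even_pow_sub_pow_eq_div {p n : ℕ} (hn : Odd n) :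
    ∑ i ∈ (Finset.Icc 1 n).filter (fun i => Even i), (p ^ i - p ^ (i - 1))
      = (p ^ n - p) / (p + 1) := by
  obtain ⟨m, rfl⟩ := hn
  rw [← add_one_mul_sum_filter_even_pow_sub_pow_add p m, Nat.add_sub_cancel,
    Nat.mul_div_cancel_left _ (Nat.succ_pos p)]

namespace PowerSeries

lemma C_dvd_of_forall_dvd_coeff {R : Type*} [CommSemiring R] {a : R} {F : R⟦X⟧}
    (h : ∀ i, a ∣ coeff i F) : C a ∣ F :=
  ⟨mk fun i => (h i).choose, by ext i; simp [coeff_C_mul, ← (h i).choose_spec]⟩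

theorem order_eq_of_X_pow_mul_eq_X_pow_mul_add {R : Type*} [Ring R] {A B C : R⟦X⟧} {a d k : ℕ}
    (h : X ^ a * A = X ^ d * B + C) (hA : A.order = k) (hlt : a + k < d) :
    C.order = (a + k : ℕ) := by
  have hC : ∀ i < d, coeff i C = coeff i (X ^ a * A) := fun i hi => by
    rw [eq_sub_of_add_eq' h.symm, map_sub, coeff_X_pow_mul' B, if_neg (by omega), sub_zero]
  rw [order_eq_nat] at hA ⊢
  refine ⟨?_, fun i hi => ?_⟩
  · rw [hC _ hlt, coeff_X_pow_mul', if_pos (by omega), Nat.add_sub_cancel_left]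
    exact hA.1
  · rw [hC _ (by omega), coeff_X_pow_mul']
    split_ifs
    · exact hA.2 _ (by omega)
    · rfl

end PowerSeries

namespace Polynomial

lemma map_one_add_X_pow_sub_one {R K : Type*} [CommRing R] [CommRing K] {p : ℕ} [Fact p.Prime]
    [CharP K p] (f : R →+* K) (n : ℕ) : ((1 + X) ^ p ^ n - 1 : R[X]).map f = X ^ p ^ n := by
  simp [add_pow_char_pow]

lemma map_cyclotomic_prime_pow_comp_one_add_X {R K : Type*} [CommRing R] [CommRing K] {p : ℕ}
    [Fact p.Prime] [CharP K p] (f : R →+* K) {i : ℕ} (hi : 0 < i) :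
    ((cyclotomic (p ^ i) R).comp (1 + X)).map f = X ^ (p ^ i - p ^ (i - 1)) := by
  have h := cyclotomic_mul_prime_pow_eq K (Nat.Prime.not_dvd_one Fact.out) hi
  rw [mul_one] at h
  rw [Polynomial.map_comp, map_cyclotomic, h]
  simp

lemma map_prod_cyclotomic_prime_pow_comp_one_add_X {R K : Type*} [CommRing R] [CommRing K]
    {p : ℕ} [Fact p.Prime] [CharP K p] (f : R →+* K) (n : ℕ) :
    (∏ i ∈ (Finset.Icc 1 n).filter (fun i => Even i), (cyclotomic (p ^ i) R).comp (1 + X)).map f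
      = X ^ ∑ i ∈ (Finset.Icc 1 n).filter (fun i => Even i), (p ^ i - p ^ (i - 1)) := by
  rw [Polynomial.map_prod, ← Finset.prod_pow_eq_pow_sum]
  refine Finset.prod_congr rfl fun i hi => map_cyclotomic_prime_pow_comp_one_add_X f ?_
  simp only [Finset.mem_filter, Finset.mem_Icc] at hi
  omega

lemma monic_one_add_X_pow_sub_one {R : Type*} [CommRing R] [Nontrivial R] {N : ℕ} (hN : 0 < N) :
    ((1 + X) ^ N - 1 : R[X]).Monic := by
  rw [add_comm, ← C_1]
  exact ((monic_X_add_C 1).pow N).sub_of_left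
    (degree_lt_degree (by rw [natDegree_C, natDegree_pow_X_add_C]; omega))

namespace IsDistinguishedAt

variable {A : Type*} [CommRing A] [IsLocalRing A] {g : A[X]}

theorem map_residue_ne_zero (hg : g.IsDistinguishedAt (maximalIdeal A)) :
    (g : A⟦X⟧).map (residue A) ≠ 0 :=
  hg.map_ne_zero_of_eq_mul _ 1 (by simp) (mul_one _).symm

theorem eq_weierstrassMod_of_dvd_sub [IsAdicComplete (maximalIdeal A) A] {r : A[X]} {f : A⟦X⟧}
    (hg : g.IsDistinguishedAt (maximalIdeal A)) (hr : r.degree < g.natDegree)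
    (h : (g : A⟦X⟧) ∣ r - f) : r = f %ʷ (g : A⟦X⟧) := by
  obtain ⟨q, hq⟩ := h
  have horder := hg.coe_natDegree_eq_order_map (g : A⟦X⟧) 1 (by simp) (mul_one _).symm
  refine (PowerSeries.IsWeierstrassDivision.unique hg.map_residue_ne_zero (q := -q) ⟨?_, ?_⟩).2
  · rwa [← horder, ENat.toNat_natCast]
  · rw [mul_neg, ← hq]
    ring

end IsDistinguishedAt

end Polynomial

variable {p : ℕ} [Fact p.Prime]

lemma PadicInt.toZMod_eq_zero_iff_dvd {x : ℤ_[p]} : toZMod x = 0 ↔ (p : ℤ_[p]) ∣ x := by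
  rw [← RingHom.mem_ker, ker_toZMod, maximalIdeal_eq_span_p, Ideal.mem_span_singleton]

lemma Polynomial.Monic.isDistinguishedAt_of_map_toZMod {f : ℤ_[p][X]} (hf : f.Monic)
    (h : f.map PadicInt.toZMod = X ^ f.natDegree) : f.IsDistinguishedAt (maximalIdeal ℤ_[p]) where
  mem hi := by
    rw [← PadicInt.ker_toZMod, RingHom.mem_ker, ← coeff_map, h, coeff_X_pow, if_neg hi.ne]
  monic := hf

lemma vp_eq_zero_iff {x : ℤ_[p]} : vp p x = 0 ↔ PadicInt.toZMod x ≠ 0 := by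
  by_cases hx : x = 0
  · simp [vp, hx]
  rw [vp, if_neg hx, Ne, PadicInt.toZMod_eq_zero_iff_dvd, ← pow_one (p : ℤ_[p]),
    ← Ideal.mem_span_singleton, PadicInt.mem_span_pow_iff_le_valuation x hx]
  simp

lemma vp_pow_mul (m : ℕ) (x : ℤ_[p]) : vp p (p ^ m * x) = m + vp p x := by
  by_cases hx : x = 0
  · simp [vp, hx]
  rw [vp, vp, if_neg hx, if_neg (mul_ne_zero (pow_ne_zero _ (NeZero.ne _)) hx),
    PadicInt.valuation_p_pow_mul _ _ hx]
  push_cast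
  rfl

section PowerSeries

open PowerSeries

theorem mu_eq_and_lam_eq_of_eq_pow_smul {F F' : ℤ_[p]⟦X⟧} {m k : ℕ}
    (hF : F = (p : ℤ_[p]) ^ m • F') (hk : (F'.map PadicInt.toZMod).order = k) :
    mu p F = m ∧ lam p F = k := by
  have hv : ∀ i, vp p (coeff i F) = m + vp p (coeff i F') := fun i => by
    rw [hF, coeff_smul, smul_eq_mul, vp_pow_mul]
  have hv_eq : ∀ i, vp p (coeff i F) = m ↔ coeff i (F'.map PadicInt.toZMod) ≠ 0 := fun i => by
    rw [hv, coeff_map, ← vp_eq_zero_iff]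
    simp
  rw [order_eq_nat] at hk
  have hmu : mu p F = m :=
    le_antisymm ((iInf_le _ k).trans ((hv_eq k).2 hk.1).le)
      (le_iInf fun i => (hv i).symm ▸ le_self_add)
  refine ⟨hmu, ?_⟩
  rw [lam, hmu]
  refine IsLeast.csInf_eq ⟨(hv_eq k).2 hk.1, fun i hi => ?_⟩
  by_contra! h
  exact (hv_eq i).1 hi (hk.2 i h)

theorem exists_eq_pow_smul_map_toZMod_ne_zero {F : ℤ_[p]⟦X⟧} (hF : F ≠ 0) :
    ∃ (m : ℕ) (F' : ℤ_[p]⟦X⟧), F = (p : ℤ_[p]) ^ m • F' ∧ F'.map PadicInt.toZMod ≠ 0 := by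
  have hp : ¬ IsUnit (C (p : ℤ_[p])) := by
    rw [isUnit_iff_constantCoeff, constantCoeff_C]
    exact PadicInt.prime_p.not_isUnit
  obtain ⟨m, F', hndvd, rfl⟩ := WfDvdMonoid.max_power_factor' hF hp
  refine ⟨m, F', by rw [smul_eq_C_mul, map_pow], fun h => hndvd ?_⟩
  refine C_dvd_of_forall_dvd_coeff fun i => PadicInt.toZMod_eq_zero_iff_dvd.mp ?_
  rw [← coeff_map, h, map_zero]

end PowerSeries

theorem stmt_12_general (p : ℕ) [Fact p.Prime] (n : ℕ) (hn : Odd n)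
    (L : PowerSeries ℤ_[p]) (hL : L ≠ 0) (hlam : lam p L < p ^ n - (p ^ n - p) / (p + 1))
    (θ : Polynomial ℤ_[p]) (hdeg : θ.degree < (p ^ n : ℕ))
    (hdvd : (((1 + Polynomial.X) ^ p ^ n - 1 : Polynomial ℤ_[p]) : PowerSeries ℤ_[p])
      ∣ ((θ : PowerSeries ℤ_[p])
        - ((∏ i ∈ (Finset.Icc 1 n).filter (fun i => Even i),
            (Polynomial.cyclotomic (p ^ i) ℤ_[p]).comp (1 + Polynomial.X) : Polynomial ℤ_[p]) : PowerSeries ℤ_[p]) * L)) :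
    θ ≠ 0 ∧ mu p (θ : PowerSeries ℤ_[p]) = mu p L
      ∧ lam p (θ : PowerSeries ℤ_[p]) = lam p L + (p ^ n - p) / (p + 1) := by
  set q := (p ^ n - p) / (p + 1)
  set P : ℤ_[p][X] := ∏ i ∈ (Finset.Icc 1 n).filter (fun i => Even i),
    (Polynomial.cyclotomic (p ^ i) ℤ_[p]).comp (1 + Polynomial.X)
  set ω : ℤ_[p][X] := (1 + Polynomial.X) ^ p ^ n - 1
  have hP : P.map PadicInt.toZMod = Polynomial.X ^ q := by
    rw [Polynomial.map_prod_cyclotomic_prime_pow_comp_one_add_X,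
      sum_filter_even_pow_sub_pow_eq_div hn]
  have hω : ω.map PadicInt.toZMod = Polynomial.X ^ p ^ n :=
    Polynomial.map_one_add_X_pow_sub_one _ n
  have hωmonic : ω.Monic :=
    Polynomial.monic_one_add_X_pow_sub_one (pow_pos (Nat.Prime.pos Fact.out) n)
  have hωdeg : ω.natDegree = p ^ n := by
    rw [← hωmonic.natDegree_map PadicInt.toZMod, hω, Polynomial.natDegree_X_pow]
  have hωdist := hωmonic.isDistinguishedAt_of_map_toZMod (hωdeg ▸ hω)
  obtain ⟨m, L', rfl, hL'⟩ := exists_eq_pow_smul_map_toZMod_ne_zero hL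
  obtain ⟨k, hk⟩ := ENat.ne_top_iff_exists.mp (PowerSeries.order_finite_iff_ne_zero.mpr hL').ne
  obtain ⟨hmuL, hlamL⟩ := mu_eq_and_lam_eq_of_eq_pow_smul (m := m) rfl hk.symm
  set R := ((P : ℤ_[p]⟦X⟧) * L') %ʷ (ω : ℤ_[p]⟦X⟧)
  have hθ : θ = (p : ℤ_[p]) ^ m • R := by
    rw [hωdist.eq_weierstrassMod_of_dvd_sub (hωdeg ▸ hdeg) hdvd, mul_smul_comm,
      PowerSeries.smul_weierstrassMod]
  have hR : ((R : ℤ_[p]⟦X⟧).map PadicInt.toZMod).order = (q + k : ℕ) := by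
    have hdiv := congrArg (PowerSeries.map PadicInt.toZMod)
      (PowerSeries.eq_mul_weierstrassDiv_add_weierstrassMod ((P : ℤ_[p]⟦X⟧) * L')
        hωdist.map_residue_ne_zero)
    simp only [map_mul, map_add, ← Polynomial.polynomial_map_coe, hP, hω, Polynomial.coe_pow,
      Polynomial.coe_X] at hdiv
    rw [Polynomial.polynomial_map_coe] at hdiv
    exact PowerSeries.order_eq_of_X_pow_mul_eq_X_pow_mul_add hdiv hk.symm (by omega)
  obtain ⟨hmuθ, hlamθ⟩ :=
    mu_eq_and_lam_eq_of_eq_pow_smul (F := θ) (by rw [hθ, Polynomial.coe_smul]) hR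
  refine ⟨?_, hmuθ.trans hmuL.symm, by rw [hlamθ, hlamL, add_comm]⟩
  rintro rfl
  simp [mu, vp] at hmuθ

theorem stmt_12 (p : ℕ) [Fact p.Prime] (n : ℕ) (hn1 : 1 ≤ n) (hn : Odd n)
    (L : PowerSeries ℤ_[p]) (hL : L ≠ 0) (hlam : lam p L < p ^ n - (p ^ n - p) / (p + 1))
    (θ : Polynomial ℤ_[p]) (hdeg : θ.degree < (p ^ n : ℕ))
    (hdvd : (((1 + Polynomial.X) ^ p ^ n - 1 : Polynomial ℤ_[p]) : PowerSeries ℤ_[p])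
      ∣ ((θ : PowerSeries ℤ_[p])
        - ((∏ i ∈ (Finset.Icc 1 n).filter (fun i => Even i),
            (Polynomial.cyclotomic (p ^ i) ℤ_[p]).comp (1 + Polynomial.X) : Polynomial ℤ_[p]) : PowerSeries ℤ_[p]) * L)) :
    θ ≠ 0 ∧ mu p (θ : PowerSeries ℤ_[p]) = mu p L
      ∧ lam p (θ : PowerSeries ℤ_[p]) = lam p L + (p ^ n - p) / (p + 1) :=
  stmt_12_general p n hn L hL hlam θ hdeg hdvd
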